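/- Let (M,d) be a pseudometric space, N a finite nonempty set of agents (points of M) partitioned into a finite nonempty collection G of nonempty groups, and A a finite nonempty set of alternatives (points of M). Suppose r : G → A assigns to each group g an alternative maximizing the group welfare, i.e., for every g ∈ G and every x ∈ A, Σ_{i∈g} d(i,x) ≤ Σ_{i∈g} d(i, r(g)). Let R = r(G) be the set of representatives, and suppose w ∈ R maximizes the total size of the groups it represents, i.e., for every x ∈ R, Σ_{g∈G : r(g)=x} |g| ≤ Σ_{g∈G : r(g)=w} |g|. Then for every alternative o ∈ A, Σ_{i∈N} d(i,o) ≤ (2|R| − 1) · Σ_{i∈N} d(i,w); in particular, Σ_{i∈N} d(i,o) ≤ (2·min(|A|,|G|) − 1) · Σ_{i∈N} d(i,w). -/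

import Mathlib

/-!
Write `S = ∑ i, d(i, w)`. Optimality of `r g` and the triangle inequality through `w` give
`∑_{i ∈ g} d(i, o) ≤ ∑_{i ∈ g} d(i, w) + |g| · d(w, r g)`; grouped by representative, the excess
terms form `∑_{x ∈ R} n_x · d(w, x)`, where `n_x` is the weight of `x` and the term at `w`
vanishes. A group `g` represented by `w` has `∑_{i ∈ g} d(i, x) ≤ ∑_{i ∈ g} d(i, w)`, so the
triangle inequality through its agents gives `|g| · d(w, x) ≤ 2 ∑_{i ∈ g} d(i, w)`; summing over
these groups, `n_x · d(w, x) ≤ n_w · d(w, x) ≤ 2S`, and the `|R| - 1` remaining terms contribute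
at most `2(|R| - 1) S`.
-/

open Finset

theorem Finset.sum_le_card_sub_one_mul {α : Type*} [DecidableEq α] {s : Finset α} {f : α → ℝ}
    {a : α} {c : ℝ} (ha : a ∈ s) (hfa : f a = 0) (hf : ∀ x ∈ s, f x ≤ c) :
    ∑ x ∈ s, f x ≤ (s.card - 1) * c := by
  rw [← add_sum_erase s f ha, hfa, zero_add]
  calc ∑ x ∈ s.erase a, f x ≤ (s.erase a).card • c :=
        sum_le_card_nsmul _ _ _ fun x hx => hf x (mem_of_mem_erase hx)
    _ = (s.card - 1) * c := by
        rw [nsmul_eq_mul, card_erase_of_mem ha, Nat.cast_pred (card_pos.mpr ⟨a, ha⟩)]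

section DistanceSums

variable {M ι : Type*} [PseudoMetricSpace M] (loc : ι → M)

theorem sum_dist_le_sum_dist_add_card_mul_dist (s : Finset ι) (x y : M) :
    ∑ i ∈ s, dist (loc i) y ≤ ∑ i ∈ s, dist (loc i) x + s.card * dist x y := by
  rw [← nsmul_eq_mul, ← sum_const, ← sum_add_distrib]
  exact sum_le_sum fun i _ => dist_triangle _ _ _

theorem card_mul_dist_le_two_mul_sum_dist {s : Finset ι} {x y : M}
    (h : ∑ i ∈ s, dist (loc i) y ≤ ∑ i ∈ s, dist (loc i) x) :
    s.card * dist x y ≤ 2 * ∑ i ∈ s, dist (loc i) x := by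
  have htriangle : s.card * dist x y ≤ ∑ i ∈ s, dist (loc i) x + ∑ i ∈ s, dist (loc i) y := by
    rw [← nsmul_eq_mul, ← sum_const, ← sum_add_distrib]
    exact sum_le_sum fun i _ => dist_triangle_left _ _ _
  linarith

end DistanceSums

section Groups

variable {M ι κ : Type*} [PseudoMetricSpace M] [DecidableEq M] (loc : ι → M)
  (G : Finset κ) (grp : κ → Finset ι) (A : Finset M) (r : κ → M)

theorem sum_card_filter_mul_dist_le {w x : M} (hx : x ∈ A)
    (hropt : ∀ g ∈ G, ∀ x ∈ A,
      ∑ i ∈ grp g, dist (loc i) x ≤ ∑ i ∈ grp g, dist (loc i) (r g)) :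
    (∑ g ∈ G with r g = w, (grp g).card : ℕ) * dist w x ≤
      2 * ∑ g ∈ G, ∑ i ∈ grp g, dist (loc i) w := by
  push_cast
  calc (∑ g ∈ G with r g = w, ((grp g).card : ℝ)) * dist w x
      = ∑ g ∈ G with r g = w, (grp g).card * dist w x := sum_mul _ _ _
    _ ≤ ∑ g ∈ G with r g = w, 2 * ∑ i ∈ grp g, dist (loc i) w := by
        refine sum_le_sum fun g hg => ?_
        obtain ⟨hgG, rfl⟩ := mem_filter.mp hg
        exact card_mul_dist_le_two_mul_sum_dist loc (hropt g hgG x hx)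
    _ ≤ 2 * ∑ g ∈ G, ∑ i ∈ grp g, dist (loc i) w := by
        rw [← mul_sum]
        gcongr
        exact filter_subset _ _

theorem sum_card_mul_dist_eq_sum_image (w : M) :
    ∑ g ∈ G, (grp g).card * dist w (r g) =
      ∑ x ∈ G.image r, (∑ g ∈ G with r g = x, (grp g).card : ℕ) * dist w x := by
  rw [← sum_fiberwise_of_maps_to fun g hg => mem_image_of_mem r hg]
  refine sum_congr rfl fun x _ => ?_
  push_cast
  rw [sum_mul]
  exact sum_congr rfl fun g hg => by rw [(mem_filter.mp hg).2]

theorem sum_sum_dist_le_of_maxWeight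
    (hrA : ∀ g ∈ G, r g ∈ A)
    (hropt : ∀ g ∈ G, ∀ x ∈ A,
      ∑ i ∈ grp g, dist (loc i) x ≤ ∑ i ∈ grp g, dist (loc i) (r g))
    {w : M} (hw : w ∈ G.image r)
    (hwmax : ∀ x ∈ G.image r,
      ∑ g ∈ G with r g = x, (grp g).card ≤ ∑ g ∈ G with r g = w, (grp g).card)
    {o : M} (ho : o ∈ A) :
    ∑ g ∈ G, ∑ i ∈ grp g, dist (loc i) o ≤
      (2 * ((G.image r).card : ℝ) - 1) * ∑ g ∈ G, ∑ i ∈ grp g, dist (loc i) w := by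
  set S := ∑ g ∈ G, ∑ i ∈ grp g, dist (loc i) w
  have hS : 0 ≤ S := sum_nonneg fun g _ => sum_nonneg fun i _ => dist_nonneg
  have hRA : ∀ x ∈ G.image r, x ∈ A := by
    simpa only [forall_mem_image] using hrA
  have hvia_w : ∑ g ∈ G, ∑ i ∈ grp g, dist (loc i) o ≤
      S + ∑ g ∈ G, (grp g).card * dist w (r g) := by
    rw [← sum_add_distrib]
    exact sum_le_sum fun g hg => (hropt g hg o ho).trans
      (sum_dist_le_sum_dist_add_card_mul_dist loc (grp g) w (r g))
  have hexcess : ∑ g ∈ G, (grp g).card * dist w (r g) ≤ ((G.image r).card - 1) * (2 * S) := by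
    rw [sum_card_mul_dist_eq_sum_image]
    refine sum_le_card_sub_one_mul hw (by rw [dist_self, mul_zero]) fun x hx => ?_
    calc (∑ g ∈ G with r g = x, (grp g).card : ℕ) * dist w x
        ≤ (∑ g ∈ G with r g = w, (grp g).card : ℕ) * dist w x :=
          mul_le_mul_of_nonneg_right (by exact_mod_cast hwmax x hx) dist_nonneg
      _ ≤ 2 * S := sum_card_filter_mul_dist_le loc G grp A r (hRA x hx) hropt
  linarith

end Groups

theorem maxWeightOfOptimal_distortion
    {M ι κ : Type*} [PseudoMetricSpace M] [DecidableEq M] [DecidableEq ι]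
    (N : Finset ι) (loc : ι → M)
    (G : Finset κ) (grp : κ → Finset ι)
    (hdisj : ∀ g ∈ G, ∀ g' ∈ G, g ≠ g' → Disjoint (grp g) (grp g'))
    (hcover : N = G.biUnion grp)
    (A : Finset M)
    (r : κ → M) (hrA : ∀ g ∈ G, r g ∈ A)
    (hropt : ∀ g ∈ G, ∀ x ∈ A,
      ∑ i ∈ grp g, dist (loc i) x ≤ ∑ i ∈ grp g, dist (loc i) (r g))
    (R : Finset M) (hR : R = G.image r)
    (w : M) (hw : w ∈ R)
    (hwmax : ∀ x ∈ R,
      ∑ g ∈ G.filter (fun g => r g = x), (grp g).card ≤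
        ∑ g ∈ G.filter (fun g => r g = w), (grp g).card)
    (o : M) (ho : o ∈ A) :
    ∑ i ∈ N, dist (loc i) o ≤ (2 * (R.card : ℝ) - 1) * ∑ i ∈ N, dist (loc i) w ∧
    ∑ i ∈ N, dist (loc i) o ≤
      (2 * (min A.card G.card : ℝ) - 1) * ∑ i ∈ N, dist (loc i) w := by
  subst hR hcover
  rw [sum_biUnion hdisj, sum_biUnion hdisj]
  have hmain := sum_sum_dist_le_of_maxWeight loc G grp A r hrA hropt hw hwmax ho
  refine ⟨hmain, hmain.trans ?_⟩
  have hcard : (G.image r).card ≤ min A.card G.card :=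
    le_min (card_le_card fun x hx => by
      obtain ⟨g, hg, rfl⟩ := mem_image.mp hx
      exact hrA g hg) card_image_le
  gcongr
  exact_mod_cast hcard
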